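/- The 6-dimensional complex Zinbiel algebra Z with basis e_1,...,e_6 and nonzero products e_1² = e_5 − e_6, [e_1,e_2] = e_4 + e_5 − e_6 = [e_3,e_2], [e_1,e_3] = e_2 = [e_1,e_5] = [e_1,e_6] = −[e_3,e_1], [e_5,e_2] = e_4 = [e_6,e_2], [e_5,e_1] = −e_2 + 2e_4 = [e_6,e_1] is nilpotent: every product of four elements vanishes (Z⁴ = 0), and Z² = span{e_2, e_4, e_5−e_6}, Z³ = span{e_4, e_5−e_6}. -/
import Mathlib

/-- Standard basis vectors of `ℂ⁶` (0-indexed: `e 0` is `e₁`, ..., `e 5` is `e₆`). -/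
noncomputable def e (i : Fin 6) : Fin 6 → ℂ := Pi.single i 1

/-- Multiplication table: `T i j = [e_{i+1}, e_{j+1}]` (0-indexed). -/
noncomputable def T : Fin 6 → Fin 6 → (Fin 6 → ℂ) :=
  ![![e 4 - e 5, e 3 + e 4 - e 5, e 1, 0, e 1, e 1],
    ![0, 0, 0, 0, 0, 0],
    ![-e 1, e 3 + e 4 - e 5, 0, 0, 0, 0],
    ![0, 0, 0, 0, 0, 0],
    ![-e 1 + (2 : ℂ) • e 3, e 3, 0, 0, 0, 0],
    ![-e 1 + (2 : ℂ) • e 3, e 3, 0, 0, 0, 0]]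

/-- Lower central series: `lcs b 0 = Z = Z¹`, `lcs b k = Z^{k+1} = [Z, Z^k]`. -/
def lcs {F : Type*} [Field F] {Z : Type*} [AddCommGroup Z] [Module F Z]
    (b : Z →ₗ[F] Z →ₗ[F] Z) : ℕ → Submodule F Z
  | 0 => ⊤
  | k + 1 => Submodule.span F {w | ∃ x : Z, ∃ y ∈ lcs b k, w = b x y}

open Submodule Finset

noncomputable def S2 : Submodule ℂ (Fin 6 → ℂ) := Submodule.span ℂ {e 1, e 3, e 4 - e 5}
noncomputable def S3 : Submodule ℂ (Fin 6 → ℂ) := Submodule.span ℂ {e 3, e 4 - e 5}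

lemma he1 : e 1 ∈ S2 := subset_span (by simp)
lemma he3 : e 3 ∈ S2 := subset_span (by simp)
lemma he45 : e 4 - e 5 ∈ S2 := subset_span (by simp)
lemma he3' : e 3 ∈ S3 := subset_span (by simp)
lemma he45' : e 4 - e 5 ∈ S3 := subset_span (by simp)

lemma hS3S2 : S3 ≤ S2 := span_mono (Set.subset_insert _ _)

lemma hTS2 (i j : Fin 6) : T i j ∈ S2 := by
  fin_cases i <;> fin_cases j <;>
    simp only [T, Matrix.cons_val', Matrix.cons_val_zero, Matrix.cons_val_one,
      Matrix.head_cons, Matrix.empty_val', Matrix.cons_val_fin_one, Matrix.head_fin_const,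
      Matrix.cons_val_two, Matrix.tail_cons, Matrix.cons_val_three, Matrix.cons_val_four] <;>
    first
      | exact S2.zero_mem
      | exact he1
      | exact he3
      | exact he45
      | exact neg_mem he1
      | exact add_mem (neg_mem he1) (smul_mem _ _ he3)
      | (rw [add_sub_assoc]; exact add_mem he3 he45)

lemma hTcol1 (i : Fin 6) : T i 1 ∈ S3 := by
  fin_cases i <;>
    simp only [T, Matrix.cons_val', Matrix.cons_val_zero, Matrix.cons_val_one,
      Matrix.head_cons, Matrix.empty_val', Matrix.cons_val_fin_one, Matrix.head_fin_const,
      Matrix.cons_val_two, Matrix.tail_cons, Matrix.cons_val_three, Matrix.cons_val_four] <;>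
    first
      | exact S3.zero_mem
      | exact he3'
      | (rw [add_sub_assoc]; exact add_mem he3' he45')

lemma hT1 (j : Fin 6) : T 1 j = 0 := by fin_cases j <;> rfl
lemma hT3 (j : Fin 6) : T 3 j = 0 := by fin_cases j <;> rfl
lemma hT45 (j : Fin 6) : T 4 j = T 5 j := by fin_cases j <;> rfl
lemma hTc3 (i : Fin 6) : T i 3 = 0 := by fin_cases i <;> rfl
lemma hTc45 (i : Fin 6) : T i 4 = T i 5 := by fin_cases i <;> rfl

lemma expand (x : Fin 6 → ℂ) : x = ∑ i, x i • e i := by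
  ext j
  simp [e, Pi.single_apply, Finset.sum_apply, eq_comm]

section
variable (b : (Fin 6 → ℂ) →ₗ[ℂ] (Fin 6 → ℂ) →ₗ[ℂ] (Fin 6 → ℂ))
  (htable : ∀ i j : Fin 6, b (e i) (e j) = T i j)

include htable

lemma b_e_left (i : Fin 6) (y : Fin 6 → ℂ) : b (e i) y = ∑ j, y j • T i j := by
  conv_lhs => rw [expand y]
  simp [htable]

lemma b_e_right (x : Fin 6 → ℂ) (j : Fin 6) : b x (e j) = ∑ i, x i • T i j := by
  conv_lhs => rw [expand x]
  simp [htable]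

lemma b_apply (x y : Fin 6 → ℂ) : b x y = ∑ i, x i • ∑ j, y j • T i j := by
  conv_lhs => rw [expand x]
  simp [b_e_left b htable]

/-- Every product lies in S2. -/
lemma hbS2 (x y : Fin 6 → ℂ) : b x y ∈ S2 := by
  rw [b_apply b htable]
  exact sum_mem fun i _ => smul_mem _ _ (sum_mem fun j _ => smul_mem _ _ (hTS2 i j))

/-- Anything in S2 left-multiplies to zero. -/
lemma hleft (u : Fin 6 → ℂ) (hu : u ∈ S2) (y : Fin 6 → ℂ) : b u y = 0 := by
  have h : S2 ≤ LinearMap.ker (b.flip y) := by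
    rw [S2, span_le]
    intro v hv
    simp only [Set.mem_insert_iff, Set.mem_singleton_iff] at hv
    rcases hv with rfl | rfl | rfl
    · simp [LinearMap.mem_ker, LinearMap.flip_apply, b_e_left b htable, hT1]
    · simp [LinearMap.mem_ker, LinearMap.flip_apply, b_e_left b htable, hT3]
    · rw [SetLike.mem_coe, LinearMap.mem_ker, LinearMap.flip_apply, map_sub,
        LinearMap.sub_apply, b_e_left b htable, b_e_left b htable,
        ← Finset.sum_sub_distrib]
      simp [hT45]
  simpa using h hu

/-- b x (e 3) = 0 and b x (e 4 - e 5) = 0. -/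
lemma hright3 (x : Fin 6 → ℂ) : b x (e 3) = 0 := by
  rw [b_e_right b htable]
  simp [hTc3]

lemma hright45 (x : Fin 6 → ℂ) : b x (e 4 - e 5) = 0 := by
  rw [map_sub, b_e_right b htable, b_e_right b htable]
  simp [← Finset.sum_sub_distrib, hTc45]

/-- Anything in S3 right-multiplies to zero. -/
lemma hright (x v : Fin 6 → ℂ) (hv : v ∈ S3) : b x v = 0 := by
  have h : S3 ≤ LinearMap.ker (b x) := by
    rw [S3, span_le]
    intro w hw
    simp only [Set.mem_insert_iff, Set.mem_singleton_iff] at hw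
    rcases hw with rfl | rfl <;>
      simp [LinearMap.mem_ker, hright3 b htable, hright45 b htable]
  simpa using h hv

/-- Products with right factor in S2 land in S3. -/
lemma hmid (x v : Fin 6 → ℂ) (hv : v ∈ S2) : b x v ∈ S3 := by
  have h : S2 ≤ Submodule.comap (b x) S3 := by
    rw [S2, span_le]
    intro w hw
    simp only [Set.mem_insert_iff, Set.mem_singleton_iff] at hw
    rcases hw with rfl | rfl | rfl
    · refine Submodule.mem_comap.mpr ?_
      rw [b_e_right b htable]
      exact sum_mem fun i _ => smul_mem _ _ (hTcol1 i)
    · exact Submodule.mem_comap.mpr (by rw [hright3 b htable]; exact S3.zero_mem)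
    · exact Submodule.mem_comap.mpr (by rw [hright45 b htable]; exact S3.zero_mem)
  exact h hv

lemma lcs1 : lcs b 1 = S2 := by
  apply le_antisymm
  · rw [show lcs b 1 = Submodule.span ℂ {w | ∃ x, ∃ y ∈ lcs b 0, w = b x y} from rfl,
      span_le]
    rintro w ⟨x, y, -, rfl⟩
    exact hbS2 b htable x y
  · rw [S2, span_le]
    intro v hv
    simp only [Set.mem_insert_iff, Set.mem_singleton_iff] at hv
    rcases hv with rfl | rfl | rfl
    · exact subset_span ⟨e 0, e 2, trivial, by rw [htable]; simp [T]⟩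
    · exact subset_span ⟨e 4, e 1, trivial, by rw [htable]; simp [T]⟩
    · exact subset_span ⟨e 0, e 0, trivial, by rw [htable]; simp [T]⟩

lemma lcs2 : lcs b 2 = S3 := by
  apply le_antisymm
  · rw [show lcs b 2 = Submodule.span ℂ {w | ∃ x, ∃ y ∈ lcs b 1, w = b x y} from rfl,
      span_le]
    rintro w ⟨x, y, hy, rfl⟩
    exact hmid b htable x y ((lcs1 b htable) ▸ hy)
  · rw [S3, span_le]
    have h1 : e 1 ∈ lcs b 1 := (lcs1 b htable) ▸ he1
    intro v hv
    simp only [Set.mem_insert_iff, Set.mem_singleton_iff] at hv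
    rcases hv with rfl | rfl
    · exact subset_span ⟨e 4, e 1, h1, by rw [htable]; simp [T]⟩
    · refine subset_span ⟨e 0 - e 4, e 1, h1, ?_⟩
      rw [map_sub, LinearMap.sub_apply, htable, htable]
      simp only [T, Matrix.cons_val', Matrix.cons_val_zero, Matrix.cons_val_one,
        Matrix.head_cons, Matrix.empty_val', Matrix.cons_val_fin_one, Matrix.head_fin_const,
        Matrix.cons_val_four, Matrix.tail_cons]
      abel

lemma lcs3 : lcs b 3 = ⊥ := by
  rw [eq_bot_iff, show lcs b 3 = Submodule.span ℂ {w | ∃ x, ∃ y ∈ lcs b 2, w = b x y} from rfl,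
    span_le]
  rintro w ⟨x, y, hy, rfl⟩
  rw [SetLike.mem_coe, Submodule.mem_bot]
  exact hright b htable x y ((lcs2 b htable) ▸ hy)

end

/-- the 6-dimensional complex Zinbiel algebra with the above table is
nilpotent: every product of four elements (in any bracketing) vanishes, i.e. `Z⁴ = 0`,
with `Z² = span{e₂, e₄, e₅ - e₆}` and `Z³ = span{e₄, e₅ - e₆}`. -/
theorem stmt9 (b : (Fin 6 → ℂ) →ₗ[ℂ] (Fin 6 → ℂ) →ₗ[ℂ] (Fin 6 → ℂ))
    (htable : ∀ i j : Fin 6, b (e i) (e j) = T i j) :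
    (∀ x y z w : Fin 6 → ℂ,
      b x (b y (b z w)) = 0 ∧ b x (b (b y z) w) = 0 ∧ b (b x y) (b z w) = 0 ∧
      b (b x (b y z)) w = 0 ∧ b (b (b x y) z) w = 0) ∧
    lcs b 3 = ⊥ ∧
    lcs b 1 = Submodule.span ℂ {e 1, e 3, e 4 - e 5} ∧
    lcs b 2 = Submodule.span ℂ {e 3, e 4 - e 5} := by
  refine ⟨fun x y z w => ?_, lcs3 b htable, lcs1 b htable, lcs2 b htable⟩
  refine ⟨?_, ?_, ?_, ?_, ?_⟩
  · exact hright b htable x _ (hmid b htable y _ (hbS2 b htable z w))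
  · rw [hleft b htable _ (hbS2 b htable y z) w, map_zero]
  · exact hleft b htable _ (hbS2 b htable x y) _
  · exact hleft b htable _ (hS3S2 (hmid b htable x _ (hbS2 b htable y z))) w
  · rw [hleft b htable _ (hbS2 b htable x y) z, map_zero, LinearMap.zero_apply]
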